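/- arXiv:2012.11141 — 6 statements merged into one kernel-verified Lean document; each statement's English description precedes it below -/
import Mathlib

section
/- Let a > 0 and let φ : ℝ → ℝ be a C² solution of the wormhole kink ODE such that φ'(r) → 0 and sin(φ(r)) → 0 as r → +∞. Then the energy balance identity holds: (1/2)·φ'(0)² − sin²(φ(0)) = ∫_0^∞ (2r/(r²+a²))·φ'(r)² dr, and in particular the integral on the right-hand side converges. -/
/-!
Multiplying the ODE by `φ'` shows that the energy `E = sin² φ − φ'²/2` satisfies
`E' = (2r/(r²+a²)) φ'²`, which is nonnegative for `r ≥ 0`. Since `E → 0` at `+∞`, the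
fundamental theorem of calculus for a nonnegative derivative on `(0, ∞)` gives both the
integrability and `∫₀^∞ E' = 0 − E(0)`.
-/

open Real Filter MeasureTheory

noncomputable def kinkEnergy (φ : ℝ → ℝ) (r : ℝ) : ℝ :=
  sin (φ r) ^ 2 - 1 / 2 * deriv φ r ^ 2

theorem hasDerivAt_kinkEnergy {φ : ℝ → ℝ} {r c : ℝ} (hφ : DifferentiableAt ℝ φ r)
    (hφ' : DifferentiableAt ℝ (deriv φ) r)
    (hode : deriv (deriv φ) r + c * deriv φ r = sin (2 * φ r)) :
    HasDerivAt (kinkEnergy φ) (c * deriv φ r ^ 2) r := by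
  have hsin : HasDerivAt (fun x => sin (φ x) ^ 2)
      (2 * sin (φ r) * (cos (φ r) * deriv φ r)) r := by
    simpa using ((hasDerivAt_sin (φ r)).comp r hφ.hasDerivAt).fun_pow 2
  have hkin : HasDerivAt (fun x => 1 / 2 * deriv φ x ^ 2)
      (1 / 2 * (2 * deriv φ r * deriv (deriv φ) r)) r := by
    simpa using (hφ'.hasDerivAt.pow 2).const_mul (1 / 2 : ℝ)
  refine (hsin.sub hkin).congr_deriv ?_
  rw [show deriv (deriv φ) r = sin (2 * φ r) - c * deriv φ r by linarith, sin_two_mul]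
  ring

theorem tendsto_kinkEnergy {φ : ℝ → ℝ} {l : Filter ℝ} (hd : Tendsto (deriv φ) l (nhds 0))
    (hs : Tendsto (fun r => sin (φ r)) l (nhds 0)) :
    Tendsto (kinkEnergy φ) l (nhds 0) := by
  have h := (hs.pow 2).sub ((hd.pow 2).const_mul (1 / 2 : ℝ))
  rwa [zero_pow two_ne_zero, mul_zero, sub_zero] at h

theorem energy_balance_general (a : ℝ) (φ : ℝ → ℝ)
    (hφ : ContDiff ℝ 2 φ)
    (hφeq : ∀ r : ℝ, deriv (deriv φ) r + (2 * r / (r ^ 2 + a ^ 2)) * deriv φ r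
        = Real.sin (2 * φ r))
    (hd : Tendsto (deriv φ) atTop (nhds 0))
    (hs : Tendsto (fun r => Real.sin (φ r)) atTop (nhds 0)) :
    IntegrableOn (fun r => (2 * r / (r ^ 2 + a ^ 2)) * (deriv φ r) ^ 2) (Set.Ioi 0) ∧
    (1/2) * (deriv φ 0) ^ 2 - Real.sin (φ 0) ^ 2
      = ∫ r in Set.Ioi (0 : ℝ), (2 * r / (r ^ 2 + a ^ 2)) * (deriv φ r) ^ 2 := by
  have hφ' : Differentiable ℝ (deriv φ) :=
    ((contDiff_succ_iff_deriv.mp (show ContDiff ℝ (1 + 1) φ from hφ)).2.2).differentiable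
      one_ne_zero
  have hE : ∀ r ∈ Set.Ici (0 : ℝ), HasDerivAt (kinkEnergy φ)
      ((2 * r / (r ^ 2 + a ^ 2)) * deriv φ r ^ 2) r := fun r _ =>
    hasDerivAt_kinkEnergy (hφ.differentiable two_ne_zero r) (hφ' r) (hφeq r)
  have hdissipation : ∀ r ∈ Set.Ioi (0 : ℝ), 0 ≤ (2 * r / (r ^ 2 + a ^ 2)) * deriv φ r ^ 2 :=
    fun r (hr : 0 < r) => by positivity
  have hlim := tendsto_kinkEnergy hd hs
  refine ⟨integrableOn_Ioi_deriv_of_nonneg' hE hdissipation hlim, ?_⟩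
  rw [integral_Ioi_of_hasDerivAt_of_nonneg' hE hdissipation hlim, kinkEnergy]
  ring

/-- Energy balance identity: for a `C²` solution of the wormhole kink ODE with `φ' → 0` and
`sin(φ) → 0` as `r → +∞`, one has
`(1/2)·φ'(0)² − sin²(φ(0)) = ∫_0^∞ (2r/(r²+a²))·φ'(r)² dr`, the integral being convergent. -/
theorem energy_balance (a : ℝ) (ha : 0 < a) (φ : ℝ → ℝ)
    (hφ : ContDiff ℝ 2 φ)
    (hφeq : ∀ r : ℝ, deriv (deriv φ) r + (2 * r / (r ^ 2 + a ^ 2)) * deriv φ r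
        = Real.sin (2 * φ r))
    (hd : Tendsto (deriv φ) atTop (nhds 0))
    (hs : Tendsto (fun r => Real.sin (φ r)) atTop (nhds 0)) :
    IntegrableOn (fun r => (2 * r / (r ^ 2 + a ^ 2)) * (deriv φ r) ^ 2) (Set.Ioi 0) ∧
    (1/2) * (deriv φ 0) ^ 2 - Real.sin (φ 0) ^ 2
      = ∫ r in Set.Ioi (0 : ℝ), (2 * r / (r ^ 2 + a ^ 2)) * (deriv φ r) ^ 2 :=
  energy_balance_general a φ hφ hφeq hd hs
end

section
/- Let a > 0 and let φ : ℝ → ℝ be the C² solution of the wormhole kink ODE with initial data φ(0) = π/2 and φ'(0) = b, where 0 < b < √2. Then φ(r) < π for all r ≥ 0 (the fictitious particle never reaches the hilltop). -/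
/-!
With friction `γ ≥ 0` the energy `E = φ'²/2 - sin² φ` is nonincreasing on `[0, ∞)`, since
`E' = -γ φ'²`. Initially `E(0) = b²/2 - 1 < 0`, while at the hilltop `φ = π` we would have
`E = φ'²/2 ≥ 0`; so by continuity `φ` stays below `π`.
-/

open Real Set

noncomputable def mechanicalEnergy (φ : ℝ → ℝ) (r : ℝ) : ℝ :=
  deriv φ r ^ 2 / 2 - sin (φ r) ^ 2

section

variable {φ γ : ℝ → ℝ}

theorem hasDerivAt_mechanicalEnergy (hφ : ContDiff ℝ 2 φ)
    (hφeq : ∀ r, deriv (deriv φ) r + γ r * deriv φ r = sin (2 * φ r)) (r : ℝ) :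
    HasDerivAt (mechanicalEnergy φ) (-(γ r * deriv φ r ^ 2)) r := by
  have hkin := ((hφ.differentiable_deriv_two r).hasDerivAt.pow 2).div_const 2
  have hpot := (hφ.differentiable two_ne_zero r).hasDerivAt.sin.pow 2
  refine (hkin.sub hpot).congr_deriv ?_
  linear_combination deriv φ r * hφeq r + deriv φ r * sin_two_mul (φ r)

theorem antitoneOn_mechanicalEnergy (hφ : ContDiff ℝ 2 φ)
    (hφeq : ∀ r, deriv (deriv φ) r + γ r * deriv φ r = sin (2 * φ r))
    (hγ : ∀ r, 0 ≤ r → 0 ≤ γ r) :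
    AntitoneOn (mechanicalEnergy φ) (Ici 0) := by
  have hE := hasDerivAt_mechanicalEnergy hφ hφeq
  refine antitoneOn_of_deriv_nonpos (convex_Ici 0)
    (fun r _ ↦ (hE r).continuousAt.continuousWithinAt)
    (fun r _ ↦ (hE r).differentiableAt.differentiableWithinAt) fun r hr ↦ ?_
  rw [interior_Ici] at hr
  rw [(hE r).deriv, neg_nonpos]
  exact mul_nonneg (hγ r hr.le) (sq_nonneg _)

end

theorem neg_sin_sq_le_mechanicalEnergy (φ : ℝ → ℝ) (r : ℝ) :
    -sin (φ r) ^ 2 ≤ mechanicalEnergy φ r := by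
  unfold mechanicalEnergy
  nlinarith [sq_nonneg (deriv φ r)]

theorem lt_of_mechanicalEnergy_neg {φ : ℝ → ℝ} {c : ℝ} (hφ : Continuous φ)
    (hc : sin c = 0) (h0 : φ 0 < c) (hE0 : mechanicalEnergy φ 0 < 0)
    (hanti : AntitoneOn (mechanicalEnergy φ) (Ici 0)) :
    ∀ r, 0 ≤ r → φ r < c := by
  intro r hr
  by_contra! hcr
  obtain ⟨s, ⟨hs, -⟩, hφs⟩ := intermediate_value_Icc hr hφ.continuousOn ⟨h0.le, hcr⟩
  have hEs := neg_sin_sq_le_mechanicalEnergy φ s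
  rw [hφs, hc] at hEs
  have := hanti self_mem_Ici (mem_Ici.mpr hs) hs
  linarith

theorem never_reaches_hilltop_general (a : ℝ) (b : ℝ) (hb0 : 0 < b)
    (hb : b < Real.sqrt 2) (φ : ℝ → ℝ)
    (hφ : ContDiff ℝ 2 φ)
    (hφeq : ∀ r : ℝ, deriv (deriv φ) r + (2 * r / (r ^ 2 + a ^ 2)) * deriv φ r
        = Real.sin (2 * φ r))
    (h0 : φ 0 = Real.pi / 2) (h0' : deriv φ 0 = b) :
    ∀ r : ℝ, 0 ≤ r → φ r < Real.pi := by
  have hanti := antitoneOn_mechanicalEnergy hφ hφeq fun r hr ↦ by positivity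
  have hb2 : b ^ 2 < 2 := (lt_sqrt hb0.le).mp hb
  have hE0 : mechanicalEnergy φ 0 < 0 := by
    rw [mechanicalEnergy, h0, h0', sin_pi_div_two]
    linarith
  exact lt_of_mechanicalEnergy_neg hφ.continuous sin_pi (by rw [h0]; linarith [pi_pos])
    hE0 hanti

/-- If `φ` solves the wormhole kink ODE with `φ(0) = π/2` and `φ'(0) = b`, `0 < b < √2`,
then `φ(r) < π` for all `r ≥ 0`: the fictitious particle never reaches the hilltop. -/
theorem never_reaches_hilltop (a : ℝ) (ha : 0 < a) (b : ℝ) (hb0 : 0 < b)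
    (hb : b < Real.sqrt 2) (φ : ℝ → ℝ)
    (hφ : ContDiff ℝ 2 φ)
    (hφeq : ∀ r : ℝ, deriv (deriv φ) r + (2 * r / (r ^ 2 + a ^ 2)) * deriv φ r
        = Real.sin (2 * φ r))
    (h0 : φ 0 = Real.pi / 2) (h0' : deriv φ 0 = b) :
    ∀ r : ℝ, 0 ≤ r → φ r < Real.pi :=
  never_reaches_hilltop_general a b hb0 hb φ hφ hφeq h0 h0'
end

section
/- Let a > 0. There exists B > 0 such that for every b ≥ B, the C² solution φ : ℝ → ℝ of the wormhole kink ODE with initial data φ(0) = π/2 and φ'(0) = b satisfies φ(r) > π for some r > 0 (the fictitious particle rolls over the hilltop). -/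
open Real

/-!
Multiplying the equation by `r² + a²` turns it into `((r² + a²) φ')' = (r² + a²) sin (2φ)`.
Since `sin ≥ -1`, the flux `(r² + a²) φ'(r) + r³/3 + a² r` is nondecreasing, so for `b ≥ 8a/3`
the velocity stays above `b/4` on `[0, a]`. Then `φ(a) ≥ π/2 + a b/4`, which exceeds `π`
once `b > 2π/a`.
-/

section Flux

noncomputable def flux (a : ℝ) (ψ : ℝ → ℝ) (r : ℝ) : ℝ :=
  (r ^ 2 + a ^ 2) * ψ r + r ^ 3 / 3 + a ^ 2 * r

variable {a : ℝ} {ψ : ℝ → ℝ}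

theorem hasDerivAt_flux {ψ' r : ℝ} (hψ : HasDerivAt ψ ψ' r) :
    HasDerivAt (flux a ψ) ((r ^ 2 + a ^ 2) * (ψ' + 2 * r / (r ^ 2 + a ^ 2) * ψ r + 1)) r := by
  have h : HasDerivAt (flux a ψ) (2 * r * ψ r + (r ^ 2 + a ^ 2) * ψ' + r ^ 2 + a ^ 2) r :=
    (((((hasDerivAt_pow 2 r).add_const (a ^ 2)).mul hψ).add
      ((hasDerivAt_pow 3 r).div_const 3)).add ((hasDerivAt_id r).const_mul (a ^ 2))).congr_deriv
      (by norm_num)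
  refine h.congr_deriv ?_
  rcases eq_or_ne (r ^ 2 + a ^ 2) 0 with h0 | h0
  · -- `r = a = 0`: the friction term is `0 / 0 = 0`, so the identity still holds
    obtain rfl : r = 0 := by nlinarith [sq_nonneg r, sq_nonneg a]
    simp only [zero_pow two_ne_zero, mul_zero, zero_div, zero_add]
    ring
  · field_simp
    ring

theorem monotone_flux (hψ : Differentiable ℝ ψ)
    (hforce : ∀ r, -1 ≤ deriv ψ r + 2 * r / (r ^ 2 + a ^ 2) * ψ r) :
    Monotone (flux a ψ) :=
  monotone_of_hasDerivAt_nonneg (fun r => hasDerivAt_flux (hψ r).hasDerivAt)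
    fun r => mul_nonneg (by positivity) (by linarith [hforce r])

theorem quarter_le_of_monotone_flux (ha : 0 < a) {b r : ℝ}
    (hmono : Monotone (flux a ψ))
    (hψ0 : ψ 0 = b) (hb : 8 * a / 3 ≤ b) (hr : r ∈ Set.Icc 0 a) :
    b / 4 ≤ ψ r := by
  obtain ⟨hr0, hra⟩ := hr
  have hflux : a ^ 2 * b ≤ (r ^ 2 + a ^ 2) * ψ r + r ^ 3 / 3 + a ^ 2 * r := by
    simpa [flux, hψ0] using hmono hr0
  have hcubic : r ^ 3 / 3 + a ^ 2 * r + r ^ 2 * (b / 4) ≤ a ^ 2 * b * (3 / 4) := by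
    nlinarith [pow_le_pow_left₀ hr0 hra 3, pow_le_pow_left₀ hr0 hra 2,
      mul_le_mul_of_nonneg_left hra (sq_nonneg a)]
  refine le_of_mul_le_mul_left ?_ (by positivity : 0 < r ^ 2 + a ^ 2)
  linarith

end Flux

/-- For large enough initial velocity `b`, the solution of the wormhole kink ODE with
`φ(0) = π/2`, `φ'(0) = b` rolls over the hilltop: `φ(r) > π` for some `r > 0`. -/
theorem rolls_over_hilltop (a : ℝ) (ha : 0 < a) :
    ∃ B : ℝ, 0 < B ∧ ∀ b : ℝ, B ≤ b → ∀ φ : ℝ → ℝ,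
      ContDiff ℝ 2 φ →
      (∀ r : ℝ, deriv (deriv φ) r + (2 * r / (r ^ 2 + a ^ 2)) * deriv φ r
          = Real.sin (2 * φ r)) →
      φ 0 = Real.pi / 2 → deriv φ 0 = b →
      ∃ r : ℝ, 0 < r ∧ Real.pi < φ r := by
  refine ⟨8 * a / 3 + 2 * π / a, by positivity, fun b hb φ hφ hode hφ0 hφ'0 => ⟨a, ha, ?_⟩⟩
  have hφd : Differentiable ℝ φ := hφ.differentiable (by norm_num)
  have hmono := monotone_flux (a := a) hφ.differentiable_deriv_two
    fun r => (hode r).symm ▸ neg_one_le_sin _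
  have hb' : 8 * a / 3 ≤ b := (le_add_of_nonneg_right (by have := pi_pos; positivity)).trans hb
  have hslope : ∀ x ∈ interior (Set.Icc 0 a), b / 4 ≤ deriv φ x := fun x hx =>
    quarter_le_of_monotone_flux ha hmono hφ'0 hb' (interior_subset hx)
  have hgrowth : b / 4 * (a - 0) ≤ φ a - φ 0 :=
    (convex_Icc 0 a).mul_sub_le_image_sub_of_le_deriv hφd.continuous.continuousOn
      hφd.differentiableOn hslope 0 ⟨le_rfl, ha.le⟩ a ⟨ha.le, le_rfl⟩ ha.le
  have hba : 8 * a ^ 2 / 3 + 2 * π ≤ b * a := by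
    calc 8 * a ^ 2 / 3 + 2 * π = (8 * a / 3 + 2 * π / a) * a := by field_simp
      _ ≤ b * a := mul_le_mul_of_nonneg_right hb ha.le
  linarith [pow_pos ha 2]
end

section
/- For every compactly supported C¹ function v : ℝ → ℝ, the quadratic form of the linearized Sine-Gordon operator is nonnegative: ∫_{−∞}^{∞} ( v'(r)² + 2·v(r)² − (4/cosh²(√2·r))·v(r)² ) dr ≥ 0. -/
/-!
The operator factors as `L = A* A` with `A = d/dr + φ`, where `φ = -v₀'/v₀ = √2 tanh(√2 r)` is
the logarithmic derivative of the zero mode: `φ` solves the Riccati equation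
`φ² - φ' = 2 - 4 / cosh² (√2 r)`. Expanding `(v' + φ v)²` and integrating the exact derivative
`(φ v²)' = φ' v² + 2 φ v v'` away, the quadratic form equals `∫ (v' + φ v)² ≥ 0`.
-/

open Real Filter MeasureTheory

theorem Real.hasDerivAt_tanh (x : ℝ) : HasDerivAt tanh (1 / cosh x ^ 2) x := by
  have h := (hasDerivAt_sinh x).div (hasDerivAt_cosh x) (cosh_pos x).ne'
  rw [← sq, ← sq, cosh_sq_sub_sinh_sq] at h
  exact h.congr_of_eventuallyEq (.of_forall tanh_eq_sinh_div_cosh)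

theorem hasDerivAt_mul_tanh_mul (c x : ℝ) :
    HasDerivAt (fun r => c * tanh (c * r)) (c ^ 2 / cosh (c * x) ^ 2) x :=
  (((hasDerivAt_tanh (c * x)).comp x ((hasDerivAt_id x).const_mul c)).const_mul c).congr_deriv
    (by ring)

theorem mul_tanh_sq_sub_div_cosh_sq (c x : ℝ) :
    (c * tanh x) ^ 2 - c ^ 2 / cosh x ^ 2 = c ^ 2 - 2 * c ^ 2 / cosh x ^ 2 := by
  have hc : cosh x ≠ 0 := (cosh_pos x).ne'
  rw [tanh_eq_sinh_div_cosh]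
  field_simp
  linear_combination -c ^ 2 * cosh_sq_sub_sinh_sq x

theorem HasCompactSupport.integrable_of_eq_zero_of_deriv_eq_zero {v F : ℝ → ℝ}
    (hv : HasCompactSupport v) (hF : Continuous F)
    (h : ∀ r, v r = 0 → deriv v r = 0 → F r = 0) : Integrable F := by
  refine hF.integrable_of_hasCompactSupport (hv.mono' fun r hr => ?_)
  by_contra hr'
  exact hr (h r (image_eq_zero_of_notMem_tsupport hr')
    (image_eq_zero_of_notMem_tsupport fun h' => hr' (tsupport_deriv_subset h')))

theorem integral_deriv_sq_add_riccati_potential_nonneg {φ φ' v : ℝ → ℝ}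
    (hφ : ∀ r, HasDerivAt φ (φ' r) r) (hφ' : Continuous φ')
    (hv : ContDiff ℝ 1 v) (hsupp : HasCompactSupport v) :
    0 ≤ ∫ r, (deriv v r ^ 2 + (φ r ^ 2 - φ' r) * v r ^ 2) := by
  have hφc : Continuous φ := continuous_iff_continuousAt.2 fun r => (hφ r).continuousAt
  have hvc : Continuous v := hv.continuous
  have hv'c : Continuous (deriv v) := hv.continuous_deriv le_rfl
  set g' : ℝ → ℝ := fun r => φ' r * v r ^ 2 + 2 * φ r * v r * deriv v r
  have hg : ∀ r, HasDerivAt (fun r => φ r * v r ^ 2) (g' r) r := fun r =>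
    ((hφ r).mul (((hv.differentiable one_ne_zero) r).hasDerivAt.pow 2)).congr_deriv
      (by simp only [g', Pi.pow_apply]; ring)
  have hg_int : Integrable fun r => φ r * v r ^ 2 :=
    hsupp.integrable_of_eq_zero_of_deriv_eq_zero (by fun_prop) fun r h0 _ => by simp [h0]
  have hg'_int : Integrable g' :=
    hsupp.integrable_of_eq_zero_of_deriv_eq_zero (by fun_prop) fun r h0 h1 => by simp [g', h0, h1]
  have hsq_int : Integrable fun r => (deriv v r + φ r * v r) ^ 2 :=
    hsupp.integrable_of_eq_zero_of_deriv_eq_zero (by fun_prop) fun r h0 h1 => by simp [h0, h1]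
  calc (0 : ℝ) ≤ ∫ r, (deriv v r + φ r * v r) ^ 2 := integral_nonneg fun r => sq_nonneg _
    _ = (∫ r, (deriv v r + φ r * v r) ^ 2) - ∫ r, g' r := by
      rw [integral_eq_zero_of_hasDerivAt_of_integrable hg hg'_int hg_int, sub_zero]
    _ = ∫ r, (deriv v r ^ 2 + (φ r ^ 2 - φ' r) * v r ^ 2) := by
      rw [← integral_sub hsq_int hg'_int]
      congr 1 with r
      ring

/-- The quadratic form of the linearized Sine-Gordon operator
`L = −d²/dr² + 2 − 4/cosh²(√2·r)` is nonnegative on compactly supported `C¹` functions. -/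
theorem quadratic_form_nonneg (v : ℝ → ℝ)
    (hv : ContDiff ℝ 1 v) (hsupp : HasCompactSupport v) :
    0 ≤ ∫ r : ℝ, ((deriv v r) ^ 2 + 2 * (v r) ^ 2
        - (4 / Real.cosh (Real.sqrt 2 * r) ^ 2) * (v r) ^ 2) := by
  have hφ' : Continuous fun r => √2 ^ 2 / cosh (√2 * r) ^ 2 := by
    fun_prop (disch := exact fun r => (pow_pos (cosh_pos _) 2).ne')
  convert integral_deriv_sq_add_riccati_potential_nonneg (hasDerivAt_mul_tanh_mul √2) hφ' hv hsupp
    using 3 with r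
  rw [mul_tanh_sq_sub_div_cosh_sq, sq_sqrt zero_le_two]
  ring
end

section
/- Let H(r) = 2·arctan(exp(√2·r)). There exists a unique C² function ψ : ℝ → ℝ that is odd (ψ(−r) = −ψ(r) for all r), satisfies ψ''(r) − 2·cos(2·H(r))·ψ(r) = −2·r·H'(r) for all r ∈ ℝ, and satisfies ψ(r) → 0 as r → ±∞. -/
/-!
With `cos 2H = 1 - 2 sech² (√2 r)` and `H' = √2 sech (√2 r)`, the homogeneous equation
`y'' = 2 (1 - 2 sech² (√2 r)) y` has the even solution `u = sech (√2 r)` and the odd, growing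
solution `v = (√2 r sech (√2 r) + sinh (√2 r)) / 2`, with Wronskian `u v' - u' v = √2`.
Variation of parameters gives the particular solution `ψ = v A - u B`, where `A' = u f / √2`
and `B' = v f / √2` for the forcing `f`; taking `A` to vanish at `+∞` and `B` odd makes `ψ` odd
and `O(r² e^{-√2 r})`. Another odd decaying solution differs from `ψ` by an odd homogeneous
solution, which vanishes at `0` and is therefore a multiple of the unbounded `v`, hence zero.
-/

open Real Filter Topology

/-- `y'' = p y + f`, with the derivative `y'` carried along. -/
def IsLinearODESolution (p f y y' : ℝ → ℝ) : Prop :=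
  ∀ r, HasDerivAt y (y' r) r ∧ HasDerivAt y' (p r * y r + f r) r

namespace IsLinearODESolution

variable {p f y y' u u' v v' w w' A B : ℝ → ℝ}

theorem sub (hy : IsLinearODESolution p f y y') (hw : IsLinearODESolution p f w w') :
    IsLinearODESolution p 0 (y - w) (y' - w') := fun r =>
  ⟨(hy r).1.sub (hw r).1, ((hy r).2.sub (hw r).2).congr_deriv <| by
    simp only [Pi.sub_apply, Pi.zero_apply]; ring⟩

theorem wronskian_eq (hu : IsLinearODESolution p 0 u u') (hv : IsLinearODESolution p 0 v v')
    (r s : ℝ) : u r * v' r - u' r * v r = u s * v' s - u' s * v s := by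
  have hW : ∀ x, HasDerivAt (fun x => u x * v' x - u' x * v x) 0 x := fun x =>
    (((hu x).1.mul (hv x).2).sub ((hu x).2.mul (hv x).1)).congr_deriv
      (by simp only [Pi.zero_apply]; ring)
  exact is_const_of_deriv_eq_zero (fun x => (hW x).differentiableAt) (fun x => (hW x).deriv) r s

theorem exists_eq_const_mul (hu : IsLinearODESolution p 0 u u')
    (hv : IsLinearODESolution p 0 v v') (hw : IsLinearODESolution p 0 w w') {a : ℝ}
    (hW : u a * v' a - u' a * v a ≠ 0) (hva : v a = 0) (hwa : w a = 0) :
    ∃ c, ∀ r, w r = c * v r := by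
  refine ⟨(u a * w' a - u' a * w a) / (u a * v' a - u' a * v a), fun r => ?_⟩
  have huv := hu.wronskian_eq hv r a
  have huw := hu.wronskian_eq hw r a
  have hwv := hw.wronskian_eq hv r a
  rw [div_mul_eq_mul_div, eq_div_iff hW]
  linear_combination (-w r) * huv + v r * huw + u r * hwv + u r * v' a * hwa - u r * w' a * hva

theorem deriv_eq (hy : IsLinearODESolution p f y y') : deriv y = y' :=
  funext fun r => (hy r).1.deriv

theorem deriv_deriv (hy : IsLinearODESolution p f y y') (r : ℝ) :
    deriv (deriv y) r = p r * y r + f r := by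
  rw [hy.deriv_eq]
  exact (hy r).2.deriv

theorem contDiff_two (hp : Continuous p) (hf : Continuous f)
    (hy : IsLinearODESolution p f y y') : ContDiff ℝ 2 y := by
  have hy_diff : Differentiable ℝ y := fun r => (hy r).1.differentiableAt
  have hy'_diff : Differentiable ℝ y' := fun r => (hy r).2.differentiableAt
  rw [show (2 : WithTop ℕ∞) = 1 + 1 from rfl, contDiff_succ_iff_deriv, hy.deriv_eq,
    contDiff_one_iff_deriv]
  refine ⟨hy_diff, by simp, hy'_diff, ?_⟩
  rw [show deriv y' = fun r => p r * y r + f r from funext fun r => (hy r).2.deriv]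
  exact (hp.mul hy_diff.continuous).add hf

theorem of_contDiff (hy : ContDiff ℝ 2 y) (h : ∀ r, deriv (deriv y) r = p r * y r + f r) :
    IsLinearODESolution p f y (deriv y) := fun r =>
  have hy' : ContDiff ℝ 1 (deriv y) := ((contDiff_succ_iff_deriv (n := 1)).mp hy).2.2
  ⟨(hy.differentiable (by norm_num) r).hasDerivAt,
    h r ▸ (hy'.differentiable one_ne_zero r).hasDerivAt⟩

theorem variation_of_parameters (hu : IsLinearODESolution p 0 u u')
    (hv : IsLinearODESolution p 0 v v') {W : ℝ} (hW0 : W ≠ 0)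
    (hW : ∀ r, u r * v' r - u' r * v r = W) (hA : ∀ r, HasDerivAt A (u r * f r / W) r)
    (hB : ∀ r, HasDerivAt B (v r * f r / W) r) :
    IsLinearODESolution p f (fun r => v r * A r - u r * B r)
      (fun r => v' r * A r - u' r * B r) := fun r =>
  ⟨(((hv r).1.mul (hA r)).sub ((hu r).1.mul (hB r))).congr_deriv (by ring),
    (((hv r).2.mul (hA r)).sub ((hu r).2.mul (hB r))).congr_deriv (by
      field_simp
      simp only [Pi.zero_apply]
      linear_combination f r * hW r)⟩

end IsLinearODESolution

theorem intervalIntegral.integral_zero_neg_of_even {g : ℝ → ℝ} (hg : g.Even)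
    (r : ℝ) : ∫ t in (0 : ℝ)..(-r), g t = -∫ t in (0 : ℝ)..r, g t := by
  have h := intervalIntegral.integral_comp_neg (a := 0) (b := r) g
  simp only [hg.eq, neg_zero] at h
  rw [h, intervalIntegral.integral_symm]

theorem eq_zero_of_tendsto_const_mul {α : Type*} {l : Filter α} [l.NeBot] {g : α → ℝ}
    {c : ℝ} (hg : Tendsto g l atTop) (h : Tendsto (fun x => c * g x) l (𝓝 0)) : c = 0 := by
  have hc : Tendsto (fun x => c * g x / g x) l (𝓝 c) :=
    tendsto_const_nhds.congr' <| (hg.eventually_gt_atTop 0).mono fun x hx => by field_simp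
  exact tendsto_nhds_unique hc (by simpa using h.div_atTop hg)

theorem tendsto_add_one_sq_mul_exp_neg_atTop :
    Tendsto (fun s : ℝ => (s + 1) ^ 2 * exp (-s)) atTop (𝓝 0) := by
  have h := ((tendsto_pow_mul_exp_neg_atTop_nhds_zero 2).add
    ((tendsto_pow_mul_exp_neg_atTop_nhds_zero 1).const_mul 2)).add
    (tendsto_pow_mul_exp_neg_atTop_nhds_zero 0)
  simp only [mul_zero, add_zero] at h
  exact h.congr fun s => by ring

noncomputable section

namespace SineGordon

def kink (r : ℝ) : ℝ := 2 * arctan (exp (√2 * r))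

def C (r : ℝ) : ℝ := cosh (√2 * r)

def S (r : ℝ) : ℝ := sinh (√2 * r)

theorem sqrt_two_sq : √2 ^ 2 = 2 := sq_sqrt zero_le_two

theorem C_pos (r : ℝ) : 0 < C r := cosh_pos _

theorem C_ne_zero (r : ℝ) : C r ≠ 0 := (C_pos r).ne'

theorem C_sq_sub_S_sq (r : ℝ) : C r ^ 2 - S r ^ 2 = 1 := cosh_sq_sub_sinh_sq _

theorem C_neg (r : ℝ) : C (-r) = C r := by simp [C]

theorem S_neg (r : ℝ) : S (-r) = -S r := by simp [S]

theorem abs_S_le_C (r : ℝ) : |S r| ≤ C r := by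
  rw [S, C, abs_sinh, ← cosh_abs]
  exact (sinh_lt_cosh _).le

theorem exp_le_two_mul_C (r : ℝ) : exp (√2 * r) ≤ 2 * C r := by
  rw [C, cosh_eq]
  linarith [exp_pos (-(√2 * r))]

theorem two_mul_S_le_exp (r : ℝ) : 2 * S r ≤ exp (√2 * r) := by
  rw [S, sinh_eq]
  linarith [exp_pos (-(√2 * r))]

theorem hasDerivAt_C (r : ℝ) : HasDerivAt C (√2 * S r) r :=
  ((hasDerivAt_id' r).const_mul √2).cosh.congr_deriv (by rw [S]; ring)

theorem hasDerivAt_S (r : ℝ) : HasDerivAt S (√2 * C r) r :=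
  ((hasDerivAt_id' r).const_mul √2).sinh.congr_deriv (by rw [C]; ring)

theorem continuous_C : Continuous C := by unfold C; fun_prop

theorem continuous_S : Continuous S := by unfold S; fun_prop

theorem hasDerivAt_kink (r : ℝ) : HasDerivAt kink (√2 / C r) r := by
  have h := (((hasDerivAt_id' r).const_mul √2).exp.arctan).const_mul 2
  refine h.congr_deriv ?_
  rw [C, cosh_eq, exp_neg]
  field_simp
  ring

theorem cos_two_mul_kink (r : ℝ) : cos (2 * kink r) = 1 - 2 / C r ^ 2 := by
  have hx := exp_pos (√2 * r)
  rw [kink, cos_two_mul, cos_two_mul, cos_sq_arctan, C, cosh_eq, exp_neg]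
  field_simp
  ring

def potential (r : ℝ) : ℝ := 2 * (1 - 2 / C r ^ 2)

def forcing (r : ℝ) : ℝ := -2 * r * (√2 / C r)

theorem continuous_potential : Continuous potential :=
  continuous_const.mul (continuous_const.sub
    (continuous_const.div (continuous_C.pow 2) fun r => pow_ne_zero 2 (C_ne_zero r)))

theorem continuous_forcing : Continuous forcing :=
  (continuous_const.mul continuous_id).mul
    (continuous_const.div continuous_C C_ne_zero)

/-- `u = H' / √2`. -/
def u (r : ℝ) : ℝ := (C r)⁻¹

def u' (r : ℝ) : ℝ := -√2 * S r / C r ^ 2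

def v (r : ℝ) : ℝ := (√2 * r / C r + S r) / 2

def v' (r : ℝ) : ℝ := (√2 / C r - 2 * r * S r / C r ^ 2 + √2 * C r) / 2

theorem v_zero : v 0 = 0 := by simp [v, S]

theorem hasDerivAt_u (r : ℝ) : HasDerivAt u (u' r) r := by
  have h := (hasDerivAt_C r).inv (C_ne_zero r)
  exact h.congr_deriv (by rw [u']; field_simp)

theorem hasDerivAt_u' (r : ℝ) : HasDerivAt u' (potential r * u r) r := by
  have h := ((hasDerivAt_S r).const_mul (-√2)).div ((hasDerivAt_C r).pow 2)
    (pow_ne_zero 2 (C_ne_zero r))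
  refine h.congr_deriv ?_
  have hC := C_ne_zero r
  simp only [potential, u, Pi.pow_apply]
  field_simp
  linear_combination (-C r ^ 3 + 2 * C r * S r ^ 2) * sqrt_two_sq - 4 * C r * C_sq_sub_S_sq r

theorem hasDerivAt_v (r : ℝ) : HasDerivAt v (v' r) r := by
  have h := ((((hasDerivAt_id' r).const_mul √2).div (hasDerivAt_C r) (C_ne_zero r)).add
    (hasDerivAt_S r)).div_const 2
  refine h.congr_deriv ?_
  have hC := C_ne_zero r
  rw [v']
  field_simp
  linear_combination (-r * S r) * sqrt_two_sq

theorem hasDerivAt_v' (r : ℝ) : HasDerivAt v' (potential r * v r) r := by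
  have hC := C_ne_zero r
  have h := ((((hasDerivAt_const r √2).div (hasDerivAt_C r) hC).sub
    ((((hasDerivAt_id' r).const_mul 2).mul (hasDerivAt_S r)).div ((hasDerivAt_C r).pow 2)
      (pow_ne_zero 2 hC))).add ((hasDerivAt_C r).const_mul √2)).div_const 2
  refine h.congr_deriv ?_
  simp only [potential, v, Pi.pow_apply, Pi.mul_apply]
  field_simp
  linear_combination (C r ^ 4 * S r - C r ^ 2 * S r) * sqrt_two_sq -
    4 * √2 * r * C r * C_sq_sub_S_sq r

theorem isLinearODESolution_u : IsLinearODESolution potential 0 u u' := fun r =>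
  ⟨hasDerivAt_u r, by simpa using hasDerivAt_u' r⟩

theorem isLinearODESolution_v : IsLinearODESolution potential 0 v v' := fun r =>
  ⟨hasDerivAt_v r, by simpa using hasDerivAt_v' r⟩

theorem wronskian_u_v (r : ℝ) : u r * v' r - u' r * v r = √2 := by
  have hC := C_ne_zero r
  simp only [u, u', v, v']
  field_simp
  linear_combination r * S r * sqrt_two_sq - √2 * C r * C_sq_sub_S_sq r

-- Among the primitives, `A` is the one vanishing at `+∞` and `B` the odd one.
def A (r : ℝ) : ℝ := log (2 * C r) - √2 * r * S r / C r

def B (r : ℝ) : ℝ := (∫ t in (0 : ℝ)..r, t * S t / C t) - r ^ 2 * S r / C r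

theorem hasDerivAt_A (r : ℝ) : HasDerivAt A (u r * forcing r / √2) r := by
  have hC := C_ne_zero r
  have h := (((hasDerivAt_C r).const_mul 2).log (mul_ne_zero two_ne_zero hC)).sub
    ((((hasDerivAt_id' r).const_mul √2).mul (hasDerivAt_S r)).div (hasDerivAt_C r) hC)
  refine h.congr_deriv ?_
  simp only [u, forcing, Pi.mul_apply]
  field_simp
  linear_combination (-r * (C r ^ 2 - S r ^ 2)) * sqrt_two_sq - 2 * r * C_sq_sub_S_sq r

theorem hasDerivAt_B (r : ℝ) : HasDerivAt B (v r * forcing r / √2) r := by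
  have hC := C_ne_zero r
  have hI : HasDerivAt (fun r => ∫ t in (0 : ℝ)..r, t * S t / C t) (r * S r / C r) r :=
    ((continuous_id.mul continuous_S).div continuous_C C_ne_zero).integral_hasStrictDerivAt
      0 r |>.hasDerivAt
  have h := hI.sub (((hasDerivAt_pow 2 r).mul (hasDerivAt_S r)).div (hasDerivAt_C r) hC)
  refine h.congr_deriv ?_
  simp only [v, forcing, Pi.mul_apply]
  field_simp
  linear_combination (-√2 * r ^ 2) * C_sq_sub_S_sq r

def psi (r : ℝ) : ℝ := v r * A r - u r * B r

def psi' (r : ℝ) : ℝ := v' r * A r - u' r * B r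

theorem isLinearODESolution_psi : IsLinearODESolution potential forcing psi psi' :=
  isLinearODESolution_u.variation_of_parameters isLinearODESolution_v
    (sqrt_ne_zero'.mpr two_pos) wronskian_u_v hasDerivAt_A hasDerivAt_B

theorem psi_neg (r : ℝ) : psi (-r) = -psi r := by
  have heven : Function.Even fun t => t * S t / C t := fun t => by
    simp only [S_neg, C_neg]; ring
  have hI := intervalIntegral.integral_zero_neg_of_even heven r
  simp only [psi, u, v, A, B, C_neg, S_neg, hI]
  ring

theorem log_two_mul_cosh_sub (s : ℝ) :
    log (2 * cosh s) - s * sinh s / cosh s =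
      log (1 + exp (-(2 * s))) + 2 * s * exp (-(2 * s)) / (1 + exp (-(2 * s))) := by
  have hC : cosh s = exp s * (1 + exp (-(2 * s))) / 2 := by
    rw [cosh_eq, mul_add, ← exp_add]; ring_nf
  have hS : sinh s = exp s * (1 - exp (-(2 * s))) / 2 := by
    rw [sinh_eq, mul_sub, ← exp_add]; ring_nf
  have hx := exp_pos (-(2 * s))
  rw [hC, hS, mul_div_cancel₀ _ two_ne_zero, log_mul (exp_ne_zero s) (by positivity), log_exp]
  field_simp
  ring

theorem abs_A_le {r : ℝ} (hr : 0 ≤ r) :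
    |A r| ≤ (2 * (√2 * r) + 1) * exp (-(2 * (√2 * r))) := by
  have hs : 0 ≤ √2 * r := by positivity
  have hx := exp_pos (-(2 * (√2 * r)))
  have hlog := log_le_sub_one_of_pos (show 0 < 1 + exp (-(2 * (√2 * r))) by positivity)
  have hfrac : 2 * (√2 * r) * exp (-(2 * (√2 * r))) / (1 + exp (-(2 * (√2 * r))))
      ≤ 2 * (√2 * r) * exp (-(2 * (√2 * r))) := div_le_self (by positivity) (by linarith)
  have hA : A r = log (2 * cosh (√2 * r)) - √2 * r * sinh (√2 * r) / cosh (√2 * r) := rfl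
  rw [hA, log_two_mul_cosh_sub, abs_of_nonneg (add_nonneg (log_nonneg (by linarith))
    (by positivity))]
  linarith

theorem abs_v_le {r : ℝ} (hr : 0 ≤ r) : |v r| ≤ (√2 * r + 1) * exp (√2 * r) / 2 := by
  have hs : 0 ≤ √2 * r := by positivity
  have hC := one_le_cosh (√2 * r)
  have hS : 0 ≤ S r := sinh_nonneg_iff.mpr hs
  have h1 : √2 * r / C r ≤ √2 * r * exp (√2 * r) :=
    (div_le_self hs hC).trans (le_mul_of_one_le_right hs (one_le_exp hs))
  rw [v, abs_of_nonneg (div_nonneg (add_nonneg (div_nonneg hs (C_pos r).le) hS) zero_le_two)]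
  linarith [two_mul_S_le_exp r]

theorem abs_u_le (r : ℝ) : |u r| ≤ 2 * exp (-(√2 * r)) := by
  rw [u, abs_of_pos (inv_pos.mpr (C_pos r))]
  refine inv_le_of_inv_le₀ (by positivity) ?_
  rw [mul_inv, exp_neg, inv_inv]
  linarith [exp_le_two_mul_C r]

theorem abs_B_le (r : ℝ) : |B r| ≤ 2 * r ^ 2 := by
  have hSC (t : ℝ) : |S t / C t| ≤ 1 := by
    rw [abs_div, abs_of_pos (C_pos t), div_le_one (C_pos t)]
    exact abs_S_le_C t
  have hI : ‖∫ t in (0 : ℝ)..r, t * S t / C t‖ ≤ |r| * |r - 0| := by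
    refine intervalIntegral.norm_integral_le_of_norm_le_const fun t ht => ?_
    rw [Real.norm_eq_abs, mul_div_assoc, abs_mul]
    have ht' := Set.abs_sub_left_of_mem_uIcc (Set.uIoc_subset_uIcc ht)
    simp only [sub_zero] at ht'
    exact mul_le_of_le_one_right (abs_nonneg t) (hSC t) |>.trans ht'
  have hB : |r ^ 2 * S r / C r| ≤ r ^ 2 := by
    rw [mul_div_assoc, abs_mul, abs_of_nonneg (sq_nonneg r)]
    exact mul_le_of_le_one_right (sq_nonneg r) (hSC r)
  rw [Real.norm_eq_abs, sub_zero, ← abs_mul, ← sq, abs_sq] at hI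
  calc |B r| ≤ _ := abs_sub _ _
    _ ≤ 2 * r ^ 2 := by linarith

theorem abs_psi_le {r : ℝ} (hr : 0 ≤ r) :
    |psi r| ≤ 3 * ((√2 * r + 1) ^ 2 * exp (-(√2 * r))) := by
  have hs : 0 ≤ √2 * r := by positivity
  have hvA : |v r * A r| ≤ (√2 * r + 1) ^ 2 * exp (-(√2 * r)) := by
    rw [abs_mul]
    calc |v r| * |A r|
        ≤ (√2 * r + 1) * exp (√2 * r) / 2 *
            ((2 * (√2 * r) + 1) * exp (-(2 * (√2 * r)))) :=
          mul_le_mul (abs_v_le hr) (abs_A_le hr) (abs_nonneg _) (by positivity)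
      _ = (√2 * r + 1) * (2 * (√2 * r) + 1) / 2 * exp (-(√2 * r)) := by
          rw [← show exp (√2 * r) * exp (-(2 * (√2 * r))) = exp (-(√2 * r)) by
            rw [← exp_add]; ring_nf]
          ring
      _ ≤ (√2 * r + 1) ^ 2 * exp (-(√2 * r)) := by gcongr; nlinarith
  have huB : |u r * B r| ≤ 2 * ((√2 * r + 1) ^ 2 * exp (-(√2 * r))) := by
    rw [abs_mul]
    calc |u r| * |B r| ≤ 2 * exp (-(√2 * r)) * (2 * r ^ 2) :=
          mul_le_mul (abs_u_le r) (abs_B_le r) (abs_nonneg _) (by positivity)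
      _ = 2 * ((√2 * r) ^ 2 * exp (-(√2 * r))) := by rw [mul_pow, sqrt_two_sq]; ring
      _ ≤ 2 * ((√2 * r + 1) ^ 2 * exp (-(√2 * r))) := by gcongr; linarith
  calc |psi r| ≤ |v r * A r| + |u r * B r| := abs_sub _ _
    _ ≤ _ := by linarith

theorem tendsto_psi_atTop : Tendsto psi atTop (𝓝 0) := by
  have hs : Tendsto (fun r : ℝ => √2 * r) atTop atTop :=
    tendsto_id.const_mul_atTop (sqrt_pos.mpr two_pos)
  have hbound := (tendsto_add_one_sq_mul_exp_neg_atTop.comp hs).const_mul 3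
  rw [mul_zero] at hbound
  refine squeeze_zero_norm' ?_ hbound
  filter_upwards [eventually_ge_atTop 0] with r hr
  exact abs_psi_le hr

theorem tendsto_psi_atBot : Tendsto psi atBot (𝓝 0) := by
  have h := (tendsto_psi_atTop.comp tendsto_neg_atBot_atTop).neg
  simp only [Function.comp_def, psi_neg, neg_neg, neg_zero] at h
  exact h

theorem tendsto_v_atTop : Tendsto v atTop atTop := by
  refine tendsto_atTop_mono' _ ?_ (tendsto_id.const_mul_atTop (by positivity : 0 < √2 / 4))
  filter_upwards [eventually_ge_atTop 0] with r hr
  have hs : 0 ≤ √2 * r := by positivity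
  have h2S : √2 * r ≤ 2 * S r := by
    rw [S, sinh_eq]
    linarith [add_one_le_exp (√2 * r), exp_le_one_iff.mpr (neg_nonpos.mpr hs)]
  have : 0 ≤ √2 * r / C r := div_nonneg hs (C_pos r).le
  rw [v, id]
  linarith

end SineGordon

end

open SineGordon in
/-- There exists a unique odd, decaying `C²` solution of the inhomogeneous linearized
equation `ψ'' − 2·cos(2H)·ψ = −2·r·H'` around the Sine-Gordon kink. -/
theorem inhomogeneous_solution_exists_unique (H : ℝ → ℝ)
    (hH : ∀ r, H r = 2 * Real.arctan (Real.exp (Real.sqrt 2 * r))) :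
    ∃! ψ : ℝ → ℝ, ContDiff ℝ 2 ψ ∧
      (∀ r : ℝ, ψ (-r) = -ψ r) ∧
      (∀ r : ℝ, deriv (deriv ψ) r - 2 * Real.cos (2 * H r) * ψ r
          = -2 * r * deriv H r) ∧
      Tendsto ψ atTop (nhds 0) ∧ Tendsto ψ atBot (nhds 0) := by
  obtain rfl : H = kink := funext hH
  have hODE (ψ : ℝ → ℝ) (r : ℝ) :
      deriv (deriv ψ) r - 2 * cos (2 * kink r) * ψ r = -2 * r * deriv kink r ↔
        deriv (deriv ψ) r = potential r * ψ r + forcing r := by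
    rw [cos_two_mul_kink, (hasDerivAt_kink r).deriv, potential, forcing]
    constructor <;> intro h <;> linarith
  have hψ := isLinearODESolution_psi
  refine ⟨psi, ⟨hψ.contDiff_two continuous_potential continuous_forcing, psi_neg,
    fun r => (hODE psi r).mpr (hψ.deriv_deriv r), tendsto_psi_atTop, tendsto_psi_atBot⟩, ?_⟩
  rintro χ ⟨hχ, hχ_odd, hχ_ode, hχ_top, -⟩
  have hw := (IsLinearODESolution.of_contDiff hχ fun r => (hODE χ r).mp (hχ_ode r)).sub hψ
  obtain ⟨c, hc⟩ := isLinearODESolution_u.exists_eq_const_mul isLinearODESolution_v hw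
    (a := 0) (by rw [wronskian_u_v]; positivity) v_zero
    (by simp [Function.Odd.map_zero hχ_odd, Function.Odd.map_zero psi_neg])
  have hw_top := hχ_top.sub tendsto_psi_atTop
  rw [sub_zero] at hw_top
  have hc0 : c = 0 := eq_zero_of_tendsto_const_mul tendsto_v_atTop (hw_top.congr hc)
  funext r
  simpa [hc0, sub_eq_zero] using hc r
end

section
/- Let a > 0 and let φ : ℝ → ℝ be a C¹ function whose energy is finite: ∫_{−∞}^{∞} ( (1/2)·φ'(r)² + sin²(φ(r)) )·(r²+a²) dr < ∞. Then the limits lim_{r→−∞} φ(r) and lim_{r→+∞} φ(r) exist and each is an integer multiple of π. -/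
/-!
Since the area factor `r² + a²` is at least `a² > 0`, finite energy makes the flat density
`φ'²/2 + sin² φ` integrable. It dominates both `sin² φ` and its derivative `2 sin φ cos φ φ'`,
so `sin² φ → 0` at `±∞`. A continuous function whose sine tends to `0` is eventually trapped
within `π/2` of a single multiple `mπ` (it cannot cross the points where `|sin| = 1`), and there
`|φ - mπ| ≤ (π/2)|sin φ|` forces convergence to `mπ`.
-/

open Real Filter MeasureTheory Set Topology

theorem IsPreconnected.forall_lt_of_forall_ne {X α : Type*} [TopologicalSpace X] [LinearOrder α]
    [TopologicalSpace α] [OrderClosedTopology α] {s : Set X} (hs : IsPreconnected s) {f : X → α}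
    (hf : ContinuousOn f s) {c : α} (hc : ∀ x ∈ s, f x ≠ c) {x₀ : X} (hx₀ : x₀ ∈ s)
    (h : f x₀ < c) : ∀ x ∈ s, f x < c := by
  intro x hx
  by_contra! hle
  obtain ⟨y, hy, hyc⟩ := hs.intermediate_value hx₀ hx hf ⟨h.le, hle⟩
  exact hc y hy hyc

theorem abs_sub_round_div_mul_le {x p : ℝ} (hp : 0 < p) : |x - round (x / p) * p| ≤ p / 2 := by
  calc |x - round (x / p) * p| = |x / p - round (x / p)| * p := by
        rw [← abs_of_pos hp, ← abs_mul, abs_of_pos hp, sub_mul, div_mul_cancel₀ _ hp.ne']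
    _ ≤ 1 / 2 * p := by gcongr; exact abs_sub_round _
    _ = p / 2 := by ring

theorem tendsto_zero_of_sq_tendsto_zero {α : Type*} {l : Filter α} {f : α → ℝ}
    (h : Tendsto (fun x => f x ^ 2) l (𝓝 0)) : Tendsto f l (𝓝 0) :=
  (tendsto_zero_iff_abs_tendsto_zero f).2 <| by
    simpa [Function.comp_def, sqrt_sq_eq_abs] using h.sqrt

theorem Real.abs_le_pi_div_two_mul_abs_sin {x : ℝ} (hx : |x| ≤ π / 2) : |x| ≤ π / 2 * |sin x| := by
  have := mul_abs_le_abs_sin hx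
  calc |x| = π / 2 * (2 / π * |x|) := by field_simp
    _ ≤ π / 2 * |sin x| := by gcongr

theorem exists_int_tendsto_atTop_mul_pi {ψ : ℝ → ℝ} (hψ : Continuous ψ)
    (h : Tendsto (fun r => sin (ψ r)) atTop (𝓝 0)) :
    ∃ m : ℤ, Tendsto ψ atTop (𝓝 (m * π)) := by
  obtain ⟨R, hR⟩ := eventually_atTop.1 <|
    h.abs.eventually (eventually_lt_nhds (by simp : |(0 : ℝ)| < 1))
  set m := round (ψ R / π)
  have habs_sin : ∀ r, |sin (ψ r - m * π)| = |sin (ψ r)| := by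
    simp [sin_sub_int_mul_pi, abs_mul]
  have hne : ∀ r ∈ Ici R, |ψ r - m * π| ≠ π / 2 := by
    intro r hr heq
    have : |sin (ψ r - m * π)| = 1 := by
      rcases (abs_eq pi_div_two_pos.le).1 heq with hv | hv <;> simp [hv]
    linarith [hR r hr, habs_sin r]
  have hnear : ∀ r ∈ Ici R, |ψ r - m * π| < π / 2 :=
    isPreconnected_Ici.forall_lt_of_forall_ne (by fun_prop) hne self_mem_Ici
      ((abs_sub_round_div_mul_le pi_pos).lt_of_ne (hne R self_mem_Ici))
  refine ⟨m, tendsto_iff_norm_sub_tendsto_zero.2 ?_⟩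
  refine squeeze_zero' (.of_forall fun r => norm_nonneg _) ?_
    (by simpa using h.abs.const_mul (π / 2))
  filter_upwards [eventually_ge_atTop R] with r hr
  rw [Real.norm_eq_abs, ← habs_sin]
  exact abs_le_pi_div_two_mul_abs_sin (hnear r hr).le

theorem exists_int_tendsto_atBot_mul_pi {ψ : ℝ → ℝ} (hψ : Continuous ψ)
    (h : Tendsto (fun r => sin (ψ r)) atBot (𝓝 0)) :
    ∃ m : ℤ, Tendsto ψ atBot (𝓝 (m * π)) := by
  obtain ⟨m, hm⟩ := exists_int_tendsto_atTop_mul_pi (ψ := fun r => ψ (-r)) (by fun_prop)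
    (h.comp tendsto_neg_atTop_atBot)
  exact ⟨m, by simpa [Function.comp_def] using hm.comp tendsto_neg_atBot_atTop⟩

theorem integrable_of_lintegral_mul_lt_top {α : Type*} [MeasurableSpace α] {μ : Measure α}
    {f w : α → ℝ} (hf : AEStronglyMeasurable f μ) (hf₀ : 0 ≤ f) {c : ℝ} (hc : 0 < c)
    (hw : ∀ x, c ≤ w x) (h : ∫⁻ x, ENNReal.ofReal (f x * w x) ∂μ < ⊤) : Integrable f μ := by
  refine ⟨hf, (hasFiniteIntegral_iff_ofReal (.of_forall hf₀)).2 ?_⟩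
  calc ∫⁻ x, ENNReal.ofReal (f x) ∂μ
        ≤ ∫⁻ x, ENNReal.ofReal c⁻¹ * ENNReal.ofReal (f x * w x) ∂μ := by
        refine lintegral_mono fun x => ?_
        rw [← ENNReal.ofReal_mul (by positivity)]
        refine ENNReal.ofReal_le_ofReal ?_
        rw [le_inv_mul_iff₀ hc, mul_comm]
        exact mul_le_mul_of_nonneg_left (hw x) (hf₀ x)
    _ = ENNReal.ofReal c⁻¹ * ∫⁻ x, ENNReal.ofReal (f x * w x) ∂μ :=
        lintegral_const_mul' _ _ ENNReal.ofReal_ne_top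
    _ < ⊤ := ENNReal.mul_lt_top ENNReal.ofReal_lt_top h

/-- The energy density of a static field on flat space; on the wormhole it carries the extra
area factor `r² + a²`. -/
noncomputable def sineGordonDensity (φ : ℝ → ℝ) (r : ℝ) : ℝ :=
  (1 / 2) * deriv φ r ^ 2 + sin (φ r) ^ 2

section
variable {φ : ℝ → ℝ}

theorem sineGordonDensity_nonneg : 0 ≤ sineGordonDensity φ := fun r => by
  unfold sineGordonDensity; positivity

theorem ContDiff.continuous_sineGordonDensity (hφ : ContDiff ℝ 1 φ) :
    Continuous (sineGordonDensity φ) := by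
  have := hφ.continuous_deriv le_rfl
  have := hφ.continuous
  unfold sineGordonDensity
  fun_prop

theorem abs_two_mul_sin_mul_cos_mul_deriv_le (r : ℝ) :
    |2 * sin (φ r) * cos (φ r) * deriv φ r| ≤ 2 * sineGordonDensity φ r := by
  have hcos := abs_cos_le_one (φ r)
  have hsin := abs_nonneg (sin (φ r))
  have hd := abs_nonneg (deriv φ r)
  rw [abs_mul, abs_mul, abs_mul, abs_two, sineGordonDensity, ← sq_abs (deriv φ r),
    ← sq_abs (sin (φ r))]
  nlinarith [sq_nonneg (|deriv φ r| - 2 * |sin (φ r)|), mul_nonneg hsin hd,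
    mul_le_mul_of_nonneg_left hcos (mul_nonneg hsin hd)]

theorem tendsto_sin_comp_of_integrable_sineGordonDensity (hφ : ContDiff ℝ 1 φ)
    (hε : Integrable (sineGordonDensity φ)) :
    Tendsto (fun r => sin (φ r)) atBot (𝓝 0) ∧ Tendsto (fun r => sin (φ r)) atTop (𝓝 0) := by
  have hφ' := hφ.continuous_deriv le_rfl
  have hφc := hφ.continuous
  have hderiv (r : ℝ) : HasDerivAt (fun r => sin (φ r) ^ 2)
      (2 * sin (φ r) * cos (φ r) * deriv φ r) r := by
    refine ((hasDerivAt_pow 2 _).comp r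
      (hφ.differentiable one_ne_zero r).hasDerivAt.sin).congr_deriv ?_
    push_cast
    ring
  have hderiv_int : Integrable (fun r => 2 * sin (φ r) * cos (φ r) * deriv φ r) :=
    (hε.const_mul 2).mono' (by fun_prop)
      (.of_forall abs_two_mul_sin_mul_cos_mul_deriv_le)
  have hsq_int : Integrable (fun r => sin (φ r) ^ 2) :=
    hε.mono' (by fun_prop) (.of_forall fun r => by
      simpa [sineGordonDensity] using sq_nonneg (deriv φ r))
  exact ⟨tendsto_zero_of_sq_tendsto_zero <| tendsto_zero_of_hasDerivAt_of_integrableOn_Iic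
      (a := 0) (fun r _ => hderiv r) hderiv_int.integrableOn hsq_int.integrableOn,
    tendsto_zero_of_sq_tendsto_zero <| tendsto_zero_of_hasDerivAt_of_integrableOn_Ioi
      (a := 0) (fun r _ => hderiv r) hderiv_int.integrableOn hsq_int.integrableOn⟩

end

/-- Finiteness of the wormhole energy quantizes boundary values: a `C¹` function with
finite energy has limits at `±∞`, each an integer multiple of `π`. -/
theorem finite_energy_quantization (a : ℝ) (ha : 0 < a) (φ : ℝ → ℝ)
    (hφ : ContDiff ℝ 1 φ)
    (hE : ∫⁻ r : ℝ, ENNReal.ofReal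
        (((1/2) * (deriv φ r) ^ 2 + Real.sin (φ r) ^ 2) * (r ^ 2 + a ^ 2)) < ⊤) :
    (∃ m : ℤ, Tendsto φ atBot (nhds (m * Real.pi))) ∧
    (∃ k : ℤ, Tendsto φ atTop (nhds (k * Real.pi))) := by
  have hε : Integrable (sineGordonDensity φ) :=
    integrable_of_lintegral_mul_lt_top hφ.continuous_sineGordonDensity.aestronglyMeasurable
      sineGordonDensity_nonneg (pow_pos ha 2) (fun r => le_add_of_nonneg_left (sq_nonneg r)) hE
  obtain ⟨hbot, htop⟩ := tendsto_sin_comp_of_integrable_sineGordonDensity hφ hε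
  exact ⟨exists_int_tendsto_atBot_mul_pi hφ.continuous hbot,
    exists_int_tendsto_atTop_mul_pi hφ.continuous htop⟩
end
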